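/- For every integer d ≥ 3 there exist a finite set Λ_B of vectors ξ ∈ ℚ^d with |ξ| = 1, for each ξ ∈ Λ_B an orthonormal basis (ξ, ξ₁, ξ₂, …, ξ_{d−1}) of ℝ^d, constants ε₀ > 0 and C ≥ 1, and for each ξ ∈ Λ_B a smooth function γ_ξ : B̃_{ε₀}(0) → ℝ, where B̃_{ε₀}(0) is the open ball of radius ε₀ centered at 0 in the space of real skew-symmetric d×d matrices, such that for every skew-symmetric d×d matrix A with |A| < ε₀ one has the identity A = Σ_{ξ∈Λ_B} γ_ξ(A)² (ξ₂⊗ξ₁ − ξ₁⊗ξ₂), and moreover C^{−1} ≤ γ_ξ(A) ≤ C for all such A and every ξ ∈ Λ_B. -/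

import Mathlib

open Real



def tq (n : ℕ) : ℚ := 1 / (n + 4)
def aq (n : ℕ) : ℚ := (1 - tq n ^ 2) / (1 + tq n ^ 2)
def bq (n : ℕ) : ℚ := 2 * tq n / (1 + tq n ^ 2)

lemma tq_pos (n : ℕ) : 0 < tq n := by
  unfold tq
  positivity
lemma tq_le (n : ℕ) : tq n ≤ 1 / 4 := by
  unfold tq
  rw [div_le_div_iff₀ (by positivity) (by norm_num)]
  push_cast; linarith [Nat.cast_nonneg (α := ℚ) n]

lemma tq_inj : Function.Injective tq := by
  intro m n h
  unfold tq at h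
  field_simp at h
  have h' : (m:ℚ) = n := by linarith
  exact_mod_cast h'

lemma aq_bq_sq (n : ℕ) : aq n ^ 2 + bq n ^ 2 = 1 := by
  unfold aq bq
  have h : (1 : ℚ) + tq n ^ 2 ≠ 0 := by positivity
  field_simp
  ring

lemma half_lt_aq (n : ℕ) : 1 / 2 < aq n := by
  unfold aq
  rw [div_lt_div_iff₀ (by norm_num) (by positivity)]
  nlinarith [tq_pos n, tq_le n]

lemma bq_pos (n : ℕ) : 0 < bq n := by
  unfold bq
  have := tq_pos n
  positivity

lemma bq_lt_half (n : ℕ) : bq n < 1 / 2 := by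
  unfold bq
  rw [div_lt_div_iff₀ (by positivity) (by norm_num)]
  nlinarith [tq_pos n, tq_le n]

lemma aq_inj : Function.Injective aq := by
  intro m n h
  apply tq_inj
  unfold aq at h
  have hm : (1 : ℚ) + tq m ^ 2 ≠ 0 := by positivity
  have hn : (1 : ℚ) + tq n ^ 2 ≠ 0 := by positivity
  rw [div_eq_div_iff hm hn] at h
  have h2 : tq m ^ 2 = tq n ^ 2 := by nlinarith
  have := tq_pos m; have := tq_pos n
  nlinarith [sq_nonneg (tq m - tq n), sq_nonneg (tq m + tq n)]

abbrev Pairs (d : ℕ) := {x : Fin d × Fin d // x.1 < x.2}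

noncomputable def nidx {d : ℕ} (k : Pairs d) : ℕ := (Fintype.equivFin (Pairs d) k : ℕ)
lemma nidx_inj {d : ℕ} : Function.Injective (nidx (d := d)) := fun a b h =>
  (Fintype.equivFin (Pairs d)).injective (Fin.ext h)

def cset {d : ℕ} (k : Pairs d) : Finset (Fin d) := Finset.univ \ {k.1.1, k.1.2}

lemma cset_card {d : ℕ} (k : Pairs d) : d - 2 ≤ (cset k).card := by
  unfold cset
  rw [Finset.card_sdiff_of_subset (Finset.subset_univ _)]
  have h2 : ({k.1.1, k.1.2} : Finset (Fin d)).card ≤ 2 := by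
    apply le_trans (Finset.card_insert_le _ _); simp
  simp only [Finset.card_univ, Fintype.card_fin]
  omega

lemma cset_nonempty {d : ℕ} (hd : 3 ≤ d) (k : Pairs d) : (cset k).Nonempty := by
  rw [← Finset.card_pos]; have := cset_card k; omega

noncomputable def uu {d : ℕ} (hd : 3 ≤ d) (k : Pairs d) : Fin d :=
  (cset k).min' (cset_nonempty hd k)

lemma uu_mem {d : ℕ} (hd : 3 ≤ d) (k : Pairs d) : uu hd k ∈ cset k := Finset.min'_mem _ _
lemma uu_ne_p {d : ℕ} (hd : 3 ≤ d) (k : Pairs d) : uu hd k ≠ k.1.1 := by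
  have := uu_mem hd k; unfold cset at this; simp at this; tauto
lemma uu_ne_q {d : ℕ} (hd : 3 ≤ d) (k : Pairs d) : uu hd k ≠ k.1.2 := by
  have := uu_mem hd k; unfold cset at this; simp at this; tauto

lemma cset2_nonempty {d : ℕ} (hd : 3 ≤ d) (h4 : 4 ≤ d) (k : Pairs d) :
    (cset k \ {uu hd k}).Nonempty := by
  rw [← Finset.card_pos]
  have h1 := cset_card k
  have hsub : ({uu hd k} : Finset (Fin d)) ⊆ cset k := by
    simpa using uu_mem hd k
  rw [Finset.card_sdiff_of_subset hsub]
  simp only [Finset.card_singleton]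
  omega

noncomputable def vv {d : ℕ} (hd : 3 ≤ d) (h4 : 4 ≤ d) (k : Pairs d) : Fin d :=
  (cset k \ {uu hd k}).min' (cset2_nonempty hd h4 k)

lemma vv_mem {d : ℕ} (hd : 3 ≤ d) (h4 : 4 ≤ d) (k : Pairs d) :
    vv hd h4 k ∈ cset k \ {uu hd k} := Finset.min'_mem _ _
lemma vv_ne_p {d : ℕ} (hd : 3 ≤ d) (h4 : 4 ≤ d) (k : Pairs d) : vv hd h4 k ≠ k.1.1 := by
  have := vv_mem hd h4 k; unfold cset at this; simp at this; tauto
lemma vv_ne_q {d : ℕ} (hd : 3 ≤ d) (h4 : 4 ≤ d) (k : Pairs d) : vv hd h4 k ≠ k.1.2 := by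
  have := vv_mem hd h4 k; unfold cset at this; simp at this; tauto
lemma vv_ne_u {d : ℕ} (hd : 3 ≤ d) (h4 : 4 ≤ d) (k : Pairs d) : vv hd h4 k ≠ uu hd k := by
  have := vv_mem hd h4 k; simp at this; tauto

noncomputable def ww {d : ℕ} (hd : 3 ≤ d) (k : Pairs d) : Fin d → ℝ :=
  if h4 : 4 ≤ d then
    fun i => if i = uu hd k then (aq (nidx k) : ℝ)
      else if i = vv hd h4 k then (bq (nidx k) : ℝ) else 0
  else fun i => if i = uu hd k then 1 else 0

lemma half_lt_aqR (n : ℕ) : (1:ℝ)/2 < (aq n : ℝ) := by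
  rw [show (1:ℝ)/2 = ((1/2 : ℚ) : ℝ) by norm_num, Rat.cast_lt]; exact half_lt_aq n
lemma bqR_pos (n : ℕ) : (0:ℝ) < (bq n : ℝ) := by exact_mod_cast bq_pos n
lemma bqR_lt_half (n : ℕ) : (bq n : ℝ) < 1/2 := by
  rw [show (1:ℝ)/2 = ((1/2 : ℚ) : ℝ) by norm_num, Rat.cast_lt]; exact bq_lt_half n
lemma aq_bq_sqR (n : ℕ) : (aq n : ℝ)^2 + (bq n : ℝ)^2 = 1 := by exact_mod_cast aq_bq_sq n

lemma ww_rat {d : ℕ} (hd : 3 ≤ d) (k : Pairs d) (i : Fin d) : ∃ q : ℚ, ww hd k i = (q : ℝ) := by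
  unfold ww
  by_cases h4 : 4 ≤ d
  · rw [dif_pos h4]
    by_cases h1 : i = uu hd k
    · exact ⟨aq (nidx k), by rw [if_pos h1]⟩
    by_cases h2 : i = vv hd h4 k
    · exact ⟨bq (nidx k), by rw [if_neg h1, if_pos h2]⟩
    · exact ⟨0, by rw [if_neg h1, if_neg h2]; norm_num⟩
  · rw [dif_neg h4]
    by_cases h1 : i = uu hd k
    · exact ⟨1, by rw [if_pos h1]; norm_num⟩
    · exact ⟨0, by rw [if_neg h1]; norm_num⟩

lemma ww_nonneg {d : ℕ} (hd : 3 ≤ d) (k : Pairs d) (i : Fin d) : 0 ≤ ww hd k i := by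
  unfold ww
  by_cases h4 : 4 ≤ d
  · rw [dif_pos h4]
    split_ifs with h1 h2
    · linarith [half_lt_aqR (nidx k)]
    · exact (bqR_pos _).le
    · exact le_refl 0
  · rw [dif_neg h4]
    split_ifs <;> norm_num

lemma ww_p_zero {d : ℕ} (hd : 3 ≤ d) (k : Pairs d) : ww hd k k.1.1 = 0 := by
  unfold ww
  by_cases h4 : 4 ≤ d
  · rw [dif_pos h4]
    rw [if_neg (fun h => uu_ne_p hd k h.symm), if_neg (fun h => vv_ne_p hd h4 k h.symm)]
  · rw [dif_neg h4]
    rw [if_neg (fun h => uu_ne_p hd k h.symm)]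

lemma ww_q_zero {d : ℕ} (hd : 3 ≤ d) (k : Pairs d) : ww hd k k.1.2 = 0 := by
  unfold ww
  by_cases h4 : 4 ≤ d
  · rw [dif_pos h4]
    rw [if_neg (fun h => uu_ne_q hd k h.symm), if_neg (fun h => vv_ne_q hd h4 k h.symm)]
  · rw [dif_neg h4]
    rw [if_neg (fun h => uu_ne_q hd k h.symm)]

lemma ww_unit {d : ℕ} (hd : 3 ≤ d) (k : Pairs d) : ∑ i, ww hd k i ^ 2 = 1 := by
  unfold ww
  by_cases h4 : 4 ≤ d
  · rw [dif_pos h4]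
    have huv := vv_ne_u hd h4 k
    have key : ∀ i : Fin d, (if i = uu hd k then (aq (nidx k) : ℝ)
        else if i = vv hd h4 k then (bq (nidx k) : ℝ) else 0) ^ 2 =
        (if i = uu hd k then ((aq (nidx k) : ℝ))^2 else 0) +
        (if i = vv hd h4 k then ((bq (nidx k) : ℝ))^2 else 0) := by
      intro i
      by_cases e1 : i = uu hd k
      · have e2 : i ≠ vv hd h4 k := by
          intro h; exact huv (by rw [← h, e1])
        rw [if_pos e1, if_pos e1, if_neg e2]; ring
      · rw [if_neg e1, if_neg e1]
        by_cases e2 : i = vv hd h4 k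
        · rw [if_pos e2, if_pos e2]; ring
        · rw [if_neg e2, if_neg e2]; ring
    simp only [key]
    rw [Finset.sum_add_distrib, Finset.sum_ite_eq' Finset.univ, Finset.sum_ite_eq' Finset.univ]
    simp only [Finset.mem_univ, if_true]
    exact aq_bq_sqR (nidx k)
  · rw [dif_neg h4]
    have key : ∀ i : Fin d, (if i = uu hd k then (1:ℝ) else 0) ^ 2 =
        (if i = uu hd k then (1:ℝ) else 0) := by intro i; split_ifs <;> ring
    simp only [key]
    rw [Finset.sum_ite_eq' Finset.univ]
    simp

lemma ww_u_big {d : ℕ} (hd : 3 ≤ d) (k : Pairs d) : 1/2 < ww hd k (uu hd k) := by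
  unfold ww
  by_cases h4 : 4 ≤ d
  · rw [dif_pos h4]
    rw [if_pos rfl]; exact half_lt_aqR _
  · rw [dif_neg h4]
    rw [if_pos rfl]; norm_num

lemma ww_gt_half {d : ℕ} (hd : 3 ≤ d) (k : Pairs d) (i : Fin d)
    (h : 1/2 < ww hd k i) : i = uu hd k := by
  by_contra h1
  unfold ww at h
  by_cases h4 : 4 ≤ d
  · rw [dif_pos h4] at h
    rw [if_neg h1] at h
    by_cases h2 : i = vv hd h4 k
    · rw [if_pos h2] at h
      linarith [bqR_lt_half (nidx k)]
    · rw [if_neg h2] at h; linarith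
  · rw [dif_neg h4] at h
    rw [if_neg h1] at h; linarith

lemma ww_inj {d : ℕ} (hd : 3 ≤ d) (k k' : Pairs d) (h : ww hd k = ww hd k') : k = k' := by
  have hu : uu hd k = uu hd k' := by
    apply ww_gt_half hd k' (uu hd k)
    rw [← h]; exact ww_u_big hd k
  by_cases h4 : 4 ≤ d
  · have hc := congrFun h (uu hd k)
    unfold ww at hc
    rw [dif_pos h4, dif_pos h4] at hc
    rw [if_pos rfl, if_pos hu] at hc
    exact nidx_inj (aq_inj (by exact_mod_cast hc))
  · have hd3 : d = 3 := by omega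
    subst hd3
    have h1 := uu_ne_p hd k
    have h2 := uu_ne_q hd k
    have h3 := uu_ne_p hd k'
    have h4' := uu_ne_q hd k'
    rw [hu] at h1 h2
    have hk := k.2
    have hk' := k'.2
    have key : ∀ (p q p' q' r : Fin 3), p < q → p' < q' → r ≠ p → r ≠ q → r ≠ p' → r ≠ q' →
        p = p' ∧ q = q' := by decide
    obtain ⟨e1, e2⟩ := key k.1.1 k.1.2 k'.1.1 k'.1.2 (uu hd k') hk hk' h1 h2 h3 h4'
    exact Subtype.ext (Prod.ext e1 e2)


lemma exists_basis_ext (d : ℕ) (hd : 3 ≤ d) (f : Fin 3 → (Fin d → ℝ))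
    (hf : ∀ a b : Fin 3, ∑ i, f a i * f b i = if a = b then (1:ℝ) else 0) :
    ∃ e : Fin d → (Fin d → ℝ),
      (∀ a : Fin 3, e ⟨a.1, by omega⟩ = f a) ∧
      ∀ k l : Fin d, ∑ i, e k i * e l i = if k = l then (1:ℝ) else 0 := by
  classical
  let E := EuclideanSpace ℝ (Fin d)
  have hcard : Module.finrank ℝ E = Fintype.card (Fin d) := by simp [E]
  let v : Fin d → E := fun i => if h : (i : ℕ) < 3 then WithLp.toLp 2 (f ⟨i, h⟩ : Fin d → ℝ) else 0
  have hinner : ∀ x y : E, (inner ℝ x y : ℝ) = ∑ i, (x : Fin d → ℝ) i * (y : Fin d → ℝ) i := by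
    intro x y
    rw [PiLp.inner_apply]
    simp [RCLike.inner_apply, mul_comm]
  have hv : Orthonormal ℝ (({i : Fin d | (i : ℕ) < 3}).restrict v) := by
    rw [orthonormal_iff_ite]
    rintro ⟨a, ha⟩ ⟨b, hb⟩
    change inner ℝ (v a) (v b) = _
    rw [hinner]
    simp only [Set.mem_setOf_eq] at ha hb
    simp only [v]
    rw [dif_pos ha, dif_pos hb]
    simp only [WithLp.ofLp_toLp]
    rw [hf ⟨a, ha⟩ ⟨b, hb⟩]
    by_cases h : a = b
    · subst h; rw [if_pos rfl, if_pos rfl]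
    · rw [if_neg (by simpa [Fin.ext_iff] using h),
        if_neg (by simpa [Subtype.ext_iff] using h)]
  obtain ⟨b, hb⟩ := hv.exists_orthonormalBasis_extension_of_card_eq hcard
  refine ⟨fun i => (b i : Fin d → ℝ), ?_, ?_⟩
  · intro a
    have h := hb ⟨a.1, by omega⟩ (by simpa [Set.mem_setOf_eq] using a.2)
    show (b ⟨a.1, by omega⟩ : Fin d → ℝ) = f a
    rw [h]
    simp only [v]
    rw [dif_pos (show ((⟨a.1, by omega⟩ : Fin d) : ℕ) < 3 from a.2)]
  · intro k l
    have h := orthonormal_iff_ite.mp b.orthonormal k l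
    rw [hinner] at h
    exact h


noncomputable def sgn (s : Bool) : ℝ := if s then 1 else -1

lemma sgn_sq (s : Bool) : sgn s ^ 2 = 1 := by cases s <;> simp [sgn]
lemma sgn_abs (s : Bool) : |sgn s| = 1 := by cases s <;> simp [sgn]

def es {d : ℕ} (p : Fin d) : Fin d → ℝ := fun i => if i = p then 1 else 0

lemma es_sum {d : ℕ} (p q : Fin d) : ∑ i, es p i * es q i = if p = q then (1:ℝ) else 0 := by
  have key : ∀ i : Fin d, es p i * es q i = if i = p then es q i else 0 := by
    intro i; unfold es
    by_cases h : i = p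
    · rw [if_pos h, if_pos h, one_mul]
    · rw [if_neg h, if_neg h, zero_mul]
  simp only [key]
  rw [Finset.sum_ite_eq' Finset.univ]
  simp only [Finset.mem_univ, if_true]
  rfl

lemma es_sum_w {d : ℕ} (hd : 3 ≤ d) (k : Pairs d) (c : ℝ) (p : Fin d) :
    ∑ i, (c * ww hd k i) * es p i = c * ww hd k p := by
  have key : ∀ i : Fin d, (c * ww hd k i) * es p i = if i = p then c * ww hd k i else 0 := by
    intro i; unfold es
    by_cases h : i = p
    · rw [if_pos h, if_pos h, mul_one]
    · rw [if_neg h, if_neg h, mul_zero]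
  simp only [key]
  rw [Finset.sum_ite_eq' Finset.univ]
  simp

noncomputable def trip {d : ℕ} (hd : 3 ≤ d) (x : Pairs d × Bool) : Fin 3 → (Fin d → ℝ) :=
  ![fun i => sgn x.2 * ww hd x.1 i,
    es (if x.2 then x.1.1.1 else x.1.1.2),
    es (if x.2 then x.1.1.2 else x.1.1.1)]

lemma trip_on {d : ℕ} (hd : 3 ≤ d) (x : Pairs d × Bool) :
    ∀ a b : Fin 3, ∑ i, trip hd x a i * trip hd x b i = if a = b then (1:ℝ) else 0 := by
  obtain ⟨k, s⟩ := x
  have hpq : k.1.1 ≠ k.1.2 := ne_of_lt k.2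
  have hw0 : ∀ p : Fin d, (p = k.1.1 ∨ p = k.1.2) → ww hd k p = 0 := by
    rintro p (rfl | rfl)
    · exact ww_p_zero hd k
    · exact ww_q_zero hd k
  have h1mem : (if s then k.1.1 else k.1.2) = k.1.1 ∨ (if s then k.1.1 else k.1.2) = k.1.2 := by
    cases s <;> simp
  have h2mem : (if s then k.1.2 else k.1.1) = k.1.1 ∨ (if s then k.1.2 else k.1.1) = k.1.2 := by
    cases s <;> simp
  have h12 : (if s then k.1.1 else k.1.2) ≠ (if s then k.1.2 else k.1.1) := by
    cases s <;> simp [hpq, Ne.symm hpq]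
  have hww : ∑ i, (sgn s * ww hd k i) * (sgn s * ww hd k i) = 1 := by
    have : ∀ i : Fin d, (sgn s * ww hd k i) * (sgn s * ww hd k i)
        = ww hd k i ^ 2 := by
      intro i
      have := sgn_sq s
      nlinarith [sgn_sq s]
    simp only [this]
    exact ww_unit hd k
  have hwe : ∀ p : Fin d, (p = k.1.1 ∨ p = k.1.2) →
      ∑ i, (sgn s * ww hd k i) * es p i = 0 := by
    intro p hp
    rw [es_sum_w hd k (sgn s) p, hw0 p hp, mul_zero]
  have hew : ∀ p : Fin d, (p = k.1.1 ∨ p = k.1.2) →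
      ∑ i, es p i * (sgn s * ww hd k i) = 0 := by
    intro p hp
    have : ∀ i : Fin d, es p i * (sgn s * ww hd k i)
        = (sgn s * ww hd k i) * es p i := fun i => mul_comm _ _
    simp only [this]
    exact hwe p hp
  have hes1 : ∑ i, es (if s then k.1.1 else k.1.2) i * es (if s then k.1.1 else k.1.2) i
      = (1:ℝ) := by rw [es_sum]; simp
  have hes2 : ∑ i, es (if s then k.1.2 else k.1.1) i * es (if s then k.1.2 else k.1.1) i
      = (1:ℝ) := by rw [es_sum]; simp
  have hes12 : ∑ i, es (if s then k.1.1 else k.1.2) i * es (if s then k.1.2 else k.1.1) i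
      = (0:ℝ) := by rw [es_sum, if_neg h12]
  have hes21 : ∑ i, es (if s then k.1.2 else k.1.1) i * es (if s then k.1.1 else k.1.2) i
      = (0:ℝ) := by rw [es_sum, if_neg (Ne.symm h12)]
  intro a b
  fin_cases a <;> fin_cases b <;>
    simp only [trip, Matrix.cons_val_zero, Matrix.cons_val_one, Matrix.head_cons,
      Matrix.cons_val_two, Matrix.tail_cons] <;>
    norm_num <;>
    first
      | exact hww
      | exact hwe _ h1mem
      | exact hwe _ h2mem
      | exact hew _ h1mem
      | exact hew _ h2mem
      | exact hes1
      | exact hes2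
      | exact hes12
      | exact hes21

noncomputable def gam {d : ℕ} (x : Pairs d × Bool) (A : Fin d → Fin d → ℝ) : ℝ :=
  Real.sqrt ((1 + sgn x.2 * A x.1.1.2 x.1.1.1) / 2)

lemma abs_entry_lt {d : ℕ} (A : Fin d → Fin d → ℝ) (ε : ℝ) (h : dist A 0 < ε) (a b : Fin d) :
    |A a b| < ε := by
  have h1 : dist (A a) ((0 : Fin d → Fin d → ℝ) a) ≤ dist A 0 := dist_le_pi_dist A 0 a
  have h2 : dist (A a b) ((0 : Fin d → Fin d → ℝ) a b) ≤ dist (A a) ((0 : Fin d → Fin d → ℝ) a) :=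
    dist_le_pi_dist (A a) ((0 : Fin d → Fin d → ℝ) a) b
  have h3 : dist (A a b) 0 = |A a b| := by rw [Real.dist_eq, sub_zero]
  have h0 : ((0 : Fin d → Fin d → ℝ) a b) = 0 := rfl
  rw [h0, h3] at h2
  linarith

lemma arg_bounds {d : ℕ} (x : Pairs d × Bool) (A : Fin d → Fin d → ℝ)
    (h : |A x.1.1.2 x.1.1.1| ≤ 1/2) :
    1/4 ≤ (1 + sgn x.2 * A x.1.1.2 x.1.1.1) / 2 ∧
      (1 + sgn x.2 * A x.1.1.2 x.1.1.1) / 2 ≤ 3/4 := by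
  have habs : |sgn x.2 * A x.1.1.2 x.1.1.1| ≤ 1/2 := by
    rw [abs_mul, sgn_abs, one_mul]; exact h
  rw [abs_le] at habs
  constructor <;> linarith [habs.1, habs.2]

lemma gam_sq {d : ℕ} (x : Pairs d × Bool) (A : Fin d → Fin d → ℝ)
    (h : |A x.1.1.2 x.1.1.1| ≤ 1/2) :
    gam x A ^ 2 = (1 + sgn x.2 * A x.1.1.2 x.1.1.1) / 2 := by
  have := (arg_bounds x A h).1
  exact Real.sq_sqrt (by linarith)

lemma gam_bounds {d : ℕ} (x : Pairs d × Bool) (A : Fin d → Fin d → ℝ)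
    (h : |A x.1.1.2 x.1.1.1| ≤ 1/2) :
    (2:ℝ)⁻¹ ≤ gam x A ∧ gam x A ≤ 2 := by
  obtain ⟨h1, h2⟩ := arg_bounds x A h
  constructor
  · have : (2:ℝ)⁻¹ = Real.sqrt (1/4) := by
      rw [show (1/4 : ℝ) = (2⁻¹)^2 by norm_num, Real.sqrt_sq (by norm_num)]
    rw [this]
    exact Real.sqrt_le_sqrt h1
  · have : (2:ℝ) = Real.sqrt 4 := by
      rw [show (4 : ℝ) = 2^2 by norm_num, Real.sqrt_sq (by norm_num)]
    rw [this]
    exact Real.sqrt_le_sqrt (by linarith)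

lemma gam_smooth {d : ℕ} (x : Pairs d × Bool) :
    ContDiffOn ℝ (⊤ : ℕ∞) (gam x)
      {A : Fin d → Fin d → ℝ | (∀ i j, A i j = -A j i) ∧ dist A 0 < 1/2} := by
  intro A hA
  obtain ⟨hskew, hdist⟩ := hA
  have habs : |A x.1.1.2 x.1.1.1| ≤ 1/2 := (abs_entry_lt A _ hdist _ _).le
  have hpos : (1 + sgn x.2 * A x.1.1.2 x.1.1.1) / 2 ≠ 0 := by
    have := (arg_bounds x A habs).1
    linarith
  have hin : ContDiff ℝ (⊤ : ℕ∞) (fun B : Fin d → Fin d → ℝ =>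
      (1 + sgn x.2 * B x.1.1.2 x.1.1.1) / 2) := by
    have heval : ContDiff ℝ (⊤ : ℕ∞) (fun B : Fin d → Fin d → ℝ => B x.1.1.2 x.1.1.1) :=
      ((ContinuousLinearMap.proj (R := ℝ) (φ := fun _ : Fin d => ℝ) x.1.1.1).comp
        (ContinuousLinearMap.proj (R := ℝ) (φ := fun _ : Fin d => Fin d → ℝ) x.1.1.2)).contDiff
    exact (contDiff_const.add (contDiff_const.mul heval)).div_const 2
  exact ((Real.contDiffAt_sqrt hpos).comp A hin.contDiffAt).contDiffWithinAt



/-- **Geometric decomposition lemma for the magnetic field (Lemma A.2).**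
For every `d ≥ 3` there are finitely many rational unit vectors `ξ`, each extended to an
orthonormal basis `(ξ, ξ₁, ξ₂, …, ξ_{d-1})` of `ℝ^d` (encoded as `e ξ : Fin d → (Fin d → ℝ)`
with `e ξ 0 = ξ`), constants `ε₀ > 0` and `C ≥ 1`, and smooth functions `γ_ξ` defined near
`0` in the space of skew-symmetric matrices, such that every skew-symmetric matrix `A` with
`|A| < ε₀` satisfies `A = ∑_ξ γ_ξ(A)² (ξ₂ ⊗ ξ₁ − ξ₁ ⊗ ξ₂)`, and `C⁻¹ ≤ γ_ξ(A) ≤ C`.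
Matrices are encoded as `Fin d → Fin d → ℝ` with the sup norm. -/
theorem geometric_lemma_magnetic (d : ℕ) (hd : 3 ≤ d) :
    ∃ (Λ : Finset (Fin d → ℝ)) (e : (Fin d → ℝ) → Fin d → (Fin d → ℝ))
      (ε₀ C : ℝ) (γ : (Fin d → ℝ) → (Fin d → Fin d → ℝ) → ℝ),
      0 < ε₀ ∧ 1 ≤ C ∧
      -- the directions are rational unit vectors
      (∀ ξ ∈ Λ, (∀ i, ∃ q : ℚ, ξ i = (q : ℝ)) ∧ ∑ i, ξ i ^ 2 = 1) ∧
      -- `(ξ, ξ₁, ξ₂, …, ξ_{d-1})` is an orthonormal basis of `ℝ^d` with first vector `ξ`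
      (∀ ξ ∈ Λ, e ξ ⟨0, by omega⟩ = ξ ∧
        ∀ k l : Fin d, ∑ i, e ξ k i * e ξ l i = if k = l then (1 : ℝ) else 0) ∧
      -- each `γ_ξ` is smooth on the ε₀-ball around `0` in the skew-symmetric matrices
      (∀ ξ ∈ Λ, ContDiffOn ℝ (⊤ : ℕ∞) (γ ξ)
        {A : Fin d → Fin d → ℝ | (∀ i j, A i j = -A j i) ∧ dist A 0 < ε₀}) ∧
      -- decomposition identity and two-sided bounds on that ball
      (∀ A : Fin d → Fin d → ℝ, (∀ i j, A i j = -A j i) → dist A 0 < ε₀ →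
        (∀ i j, A i j =
          ∑ ξ ∈ Λ, (γ ξ A) ^ 2 *
            (e ξ ⟨2, by omega⟩ i * e ξ ⟨1, by omega⟩ j -
             e ξ ⟨1, by omega⟩ i * e ξ ⟨2, by omega⟩ j)) ∧
        (∀ ξ ∈ Λ, C⁻¹ ≤ γ ξ A ∧ γ ξ A ≤ C)) := by
  classical
  haveI : Nonempty (Pairs d × Bool) :=
    ⟨⟨⟨(⟨0, by omega⟩, ⟨1, by omega⟩), by simp [Fin.mk_lt_mk]⟩, true⟩⟩
  set V : Pairs d × Bool → (Fin d → ℝ) :=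
    fun x => fun i => sgn x.2 * ww hd x.1 i with hVdef
  have hVu : ∀ x : Pairs d × Bool, 1/2 < |V x (uu hd x.1)| := by
    intro x
    have := ww_u_big hd x.1
    have hnn := ww_nonneg hd x.1 (uu hd x.1)
    show 1/2 < |sgn x.2 * ww hd x.1 (uu hd x.1)|
    rw [abs_mul, sgn_abs, one_mul, abs_of_nonneg hnn]
    exact this
  have hVinj : Function.Injective V := by
    rintro ⟨k, s⟩ ⟨k', s'⟩ h
    rw [hVdef] at h
    have h1 : ∀ i, sgn s * ww hd k i = sgn s' * ww hd k' i := by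
      intro i; simpa using congrFun h i
    have hsval : ∀ t : Bool, sgn t = 1 ∨ sgn t = -1 := by
      intro t; cases t <;> simp [sgn]
    have hss : s = s' := by
      by_contra hss
      have hopp : sgn s' = - sgn s := by
        cases s <;> cases s' <;> simp_all [sgn]
      have hu := h1 (uu hd k)
      rw [hopp] at hu
      have h2 := ww_u_big hd k
      have h3 := ww_nonneg hd k' (uu hd k)
      rcases hsval s with h4 | h4 <;> rw [h4] at hu <;> linarith
    subst hss
    have hk : k = k' := by
      apply ww_inj hd
      funext i
      have := h1 i
      rcases hsval s with h4 | h4 <;> rw [h4] at this <;> linarith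
    exact Prod.ext hk rfl
  have hex : ∀ x : Pairs d × Bool, ∃ e : Fin d → (Fin d → ℝ),
      (∀ a : Fin 3, e ⟨a.1, by omega⟩ = trip hd x a) ∧
      ∀ k l : Fin d, ∑ i, e k i * e l i = if k = l then (1:ℝ) else 0 :=
    fun x => exists_basis_ext d hd (trip hd x) (trip_on hd x)
  choose E hE0 hEon using hex
  set inv : (Fin d → ℝ) → Pairs d × Bool := Function.invFun V with hinvdef
  have hinv : ∀ x, inv (V x) = x := Function.leftInverse_invFun hVinj
  refine ⟨Finset.image V Finset.univ, fun ξ => E (inv ξ), 1/2, 2,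
    fun ξ => gam (inv ξ), by norm_num, by norm_num, ?_, ?_, ?_, ?_⟩
  · -- rational unit vectors
    intro ξ hξ
    obtain ⟨x, _, rfl⟩ := Finset.mem_image.mp hξ
    constructor
    · intro i
      obtain ⟨q, hq⟩ := ww_rat hd x.1 i
      refine ⟨(if x.2 then 1 else -1) * q, ?_⟩
      show sgn x.2 * ww hd x.1 i = _
      rw [hq]
      push_cast
      cases x.2 <;> simp [sgn]
    · show ∑ i, (sgn x.2 * ww hd x.1 i) ^ 2 = 1
      have : ∀ i : Fin d, (sgn x.2 * ww hd x.1 i) ^ 2 = ww hd x.1 i ^ 2 := by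
        intro i; rw [mul_pow, sgn_sq, one_mul]
      simp only [this]
      exact ww_unit hd x.1
  · -- basis properties
    intro ξ hξ
    obtain ⟨x, _, rfl⟩ := Finset.mem_image.mp hξ
    constructor
    · show E (inv (V x)) ⟨0, by omega⟩ = V x
      rw [hinv]
      have h0 := hE0 x 0
      have : E x ⟨0, by omega⟩ = trip hd x 0 := h0
      rw [this]
      rfl
    · intro k l
      show ∑ i, E (inv (V x)) k i * E (inv (V x)) l i = _
      rw [hinv]
      exact hEon x k l
  · -- smoothness
    intro ξ hξ
    obtain ⟨x, _, rfl⟩ := Finset.mem_image.mp hξ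
    show ContDiffOn ℝ (⊤ : ℕ∞) (gam (inv (V x))) _
    rw [hinv]
    exact gam_smooth x
  · -- identity and bounds
    intro A hA hdist
    have habs : ∀ a b : Fin d, |A a b| ≤ 1/2 := fun a b => (abs_entry_lt A _ hdist a b).le
    constructor
    · intro i j
      rw [Finset.sum_image (fun x _ y _ h => hVinj h)]
      have hrw : ∀ x : Pairs d × Bool,
          (gam (inv (V x)) A) ^ 2 *
            (E (inv (V x)) ⟨2, by omega⟩ i * E (inv (V x)) ⟨1, by omega⟩ j -
             E (inv (V x)) ⟨1, by omega⟩ i * E (inv (V x)) ⟨2, by omega⟩ j) =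
          (gam x A) ^ 2 * (trip hd x 2 i * trip hd x 1 j - trip hd x 1 i * trip hd x 2 j) := by
        intro x
        rw [hinv]
        have h1 : E x ⟨1, by omega⟩ = trip hd x 1 := hE0 x 1
        have h2 : E x ⟨2, by omega⟩ = trip hd x 2 := hE0 x 2
        rw [h1, h2]
      simp only [hrw]
      rw [Fintype.sum_prod_type]
      have hstep : ∀ k : Pairs d,
          ∑ s : Bool, (gam (k, s) A) ^ 2 *
            (trip hd (k, s) 2 i * trip hd (k, s) 1 j - trip hd (k, s) 1 i * trip hd (k, s) 2 j) =
          A k.1.2 k.1.1 * (es k.1.2 i * es k.1.1 j - es k.1.1 i * es k.1.2 j) := by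
        intro k
        rw [Fintype.sum_bool]
        have hsq1 : (gam (k, true) A) ^ 2 = (1 + A k.1.2 k.1.1) / 2 := by
          have h5 := gam_sq (k, true) A (habs _ _)
          have h6 : sgn (k, true).2 = 1 := by norm_num [sgn]
          rw [h6] at h5
          rw [h5]
          ring
        have hsq2 : (gam (k, false) A) ^ 2 = (1 - A k.1.2 k.1.1) / 2 := by
          have h5 := gam_sq (k, false) A (habs _ _)
          have h6 : sgn (k, false).2 = -1 := by norm_num [sgn]
          rw [h6] at h5
          rw [h5]
          ring
        have ht : ∀ s : Bool, trip hd (k, s) 1 = es (if s then k.1.1 else k.1.2) ∧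
            trip hd (k, s) 2 = es (if s then k.1.2 else k.1.1) := by
          intro s
          constructor <;> rfl
        rw [hsq1, hsq2, (ht true).1, (ht true).2, (ht false).1, (ht false).2]
        simp only [if_true, Bool.false_eq_true, if_false]
        ring
      simp only [hstep]
      -- now sum over pairs
      have hsub : ∑ x ∈ Finset.univ.filter (fun x : Fin d × Fin d => x.1 < x.2),
          A x.2 x.1 * (es x.2 i * es x.1 j - es x.1 i * es x.2 j)
          = ∑ k : Pairs d, A k.1.2 k.1.1 * (es k.1.2 i * es k.1.1 j - es k.1.1 i * es k.1.2 j) :=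
        Finset.sum_subtype _ (fun x => by simp) _
      rw [← hsub]
      have hAii : ∀ a : Fin d, A a a = 0 := by
        intro a; have := hA a a; linarith
      have hpt : ∀ x ∈ Finset.univ.filter (fun x : Fin d × Fin d => x.1 < x.2),
          A x.2 x.1 * (es x.2 i * es x.1 j - es x.1 i * es x.2 j) =
          (if x = (j, i) then A i j else 0) + (if x = (i, j) then A i j else 0) := by
        rintro ⟨p, q⟩ hx
        rw [Finset.mem_filter] at hx
        have hpq : p ≠ q := ne_of_lt hx.2
        simp only [Prod.mk.injEq, es]
        by_cases c1 : p = j ∧ q = i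
        · obtain ⟨h5, h6⟩ := c1
          subst h5; subst h6
          rw [if_pos rfl, if_pos rfl, if_neg (Ne.symm hpq), if_neg hpq,
            if_pos ⟨rfl, rfl⟩, if_neg (fun h : p = q ∧ q = p => hpq h.1)]
          ring
        · by_cases c2 : p = i ∧ q = j
          · obtain ⟨h5, h6⟩ := c2
            subst h5; subst h6
            rw [if_neg hpq, if_neg (Ne.symm hpq), if_pos rfl, if_pos rfl,
              if_neg (fun h : p = q ∧ q = p => hpq h.1), if_pos ⟨rfl, rfl⟩,
              hA q p]
            ring
          · have hX : (if i = q then (1:ℝ) else 0) * (if j = p then (1:ℝ) else 0) = 0 := by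
              rcases not_and_or.mp c1 with h | h
              · rw [if_neg (fun hh : j = p => h hh.symm), mul_zero]
              · rw [if_neg (fun hh : i = q => h hh.symm), zero_mul]
            have hY : (if i = p then (1:ℝ) else 0) * (if j = q then (1:ℝ) else 0) = 0 := by
              rcases not_and_or.mp c2 with h | h
              · rw [if_neg (fun hh : i = p => h hh.symm), zero_mul]
              · rw [if_neg (fun hh : j = q => h hh.symm), mul_zero]
            rw [if_neg c1, if_neg c2, hX, hY]
            ring
      rw [Finset.sum_congr rfl hpt, Finset.sum_add_distrib,
        Finset.sum_ite_eq' _ ((j, i) : Fin d × Fin d),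
        Finset.sum_ite_eq' _ ((i, j) : Fin d × Fin d)]
      simp only [Finset.mem_filter, Finset.mem_univ, true_and]
      rcases lt_trichotomy i j with h | h | h
      · rw [if_neg (by simpa using not_lt_of_gt h), if_pos (by simpa using h), zero_add]
      · subst h
        first
        | (rw [hAii i]; norm_num)
        | (rw [if_neg (by simp : ¬ ((i,i) ∈ Finset.univ.filter (fun x : Fin d × Fin d => x.1 < x.2))), if_neg (by simp), hAii i, add_zero])
      · rw [if_pos (by simpa using h), if_neg (by simpa using not_lt_of_gt h), add_zero]
    · intro ξ hξ
      obtain ⟨x, _, rfl⟩ := Finset.mem_image.mp hξ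
      show (2:ℝ)⁻¹ ≤ gam (inv (V x)) A ∧ gam (inv (V x)) A ≤ 2
      rw [hinv]
      exact gam_bounds x A (habs _ _)
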